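/- Consider a two-sender instance over a finite field F with parts P_1, P_2, P_{12}, side-information sets K_i, and eavesdropper set A with A_T = A ∩ P_T, and suppose A ∩ P_{12} = P_{12} (the eavesdropper knows every common message). For j ∈ {1,2} let l*_j be the minimal length of a valid weakly secure single-sender linear code over F for the sub-instance induced on P_j (side-information K_i ∩ P_j for i ∈ P_j, eavesdropper A_j), assumed to exist. Then the optimal two-sender codelength satisfies l* ≥ l*_1 + l*_2. Consequently, if additionally l* ≤ l*_1 + l*_2 (for instance because one of the constructions from sub-codes achieves total length l*_1 + l*_2), then l* = l*_1 + l*_2 and the constructed code is optimal. -/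

import Mathlib

/-!
Restricting a two-sender code to the rows of sender 1 and the columns of `P1` gives a valid
weakly secure code for the sub-instance on `P1`, and likewise for sender 2 and `P2`: decoding
survives because the rows of the other sender vanish on `Pj`, and security survives because the
eavesdropper already knows every column outside `P1 ∪ P2`. The two row sets partition the rows,
so `l* ≥ l*₁ + l*₂`. For this to say anything, `l*` must be attained (`sInf ∅ = 0`): stacking
codes for the two sub-instances and sending the common messages uncoded is a valid weakly secure
two-sender code, again because the eavesdropper knows the common messages.
-/

open Matrix Sum

attribute [local instance] Classical.propDecidable

noncomputable section

variable (F : Type*) [Field F] [Fintype F]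

/-- The row space of a matrix: the span of its rows. -/
def rowSpace {ρ ι : Type*} (G : Matrix ρ ι F) : Submodule F (ι → F) :=
  Submodule.span F (Set.range fun r j => G r j)

/-- Weak security of the linear code `x ↦ G x` against an eavesdropper knowing `x j` for
`j ∈ A`: for every `i ∉ A` and every `u` supported in `A`, `u + e i` is not in the
row space of `G`. -/
def WeaklySecure {ρ ι : Type*} (G : Matrix ρ ι F) (A : Set ι) : Prop :=
  ∀ i ∉ A, ∀ u : ι → F, (∀ j, u j ≠ 0 → j ∈ A) →
    u + Pi.single i (1 : F) ∉ rowSpace F G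

/-- `G` is a valid index code for side-information sets `K`: every receiver `i` can
decode `x i` from the codeword `G.mulVec x` and its side information `x|_{K i}`. -/
def ValidCode {ρ ι : Type*} [Fintype ι] (K : ι → Set ι) (G : Matrix ρ ι F) : Prop :=
  ∀ i : ι, ∃ D : (ρ → F) → (↥(K i) → F) → F,
    ∀ x : ι → F, D (G.mulVec x) (fun j => x j.1) = x i

/-- `G` has two-sender form for the parts `P1`, `P2`: its rows split into sender-1 rows,
zero on all columns in `P2`, and sender-2 rows, zero on all columns in `P1`. -/
def TwoSenderForm {ρ ι : Type*} (P1 P2 : Set ι) (G : Matrix ρ ι F) : Prop :=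
  ∃ S : Set ρ, (∀ r ∈ S, ∀ j ∈ P2, G r j = 0) ∧ (∀ r ∉ S, ∀ j ∈ P1, G r j = 0)

/-- Achievable lengths of valid weakly secure (single-sender) linear index codes. -/
def oneLens {ι : Type*} [Fintype ι] (K : ι → Set ι) (A : Set ι) : Set ℕ :=
  {l | ∃ G : Matrix (Fin l) ι F, ValidCode F K G ∧ WeaklySecure F G A}

/-- Achievable total lengths of valid weakly secure two-sender linear index codes. -/
def twoLens {ι : Type*} [Fintype ι] (P1 P2 : Set ι) (K : ι → Set ι) (A : Set ι) :
    Set ℕ :=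
  {l | ∃ G : Matrix (Fin l) ι F,
      TwoSenderForm F P1 P2 G ∧ ValidCode F K G ∧ WeaklySecure F G A}

/-- Side-information sets of the sub-instance induced on `S`. -/
def subK {ι : Type*} (K : ι → Set ι) (S : Set ι) : ↥S → Set ↥S :=
  fun i => {j : ↥S | (j : ι) ∈ K (i : ι)}

/-- Extend a matrix with columns indexed by `↥S` to one with columns indexed by `ι`,
filling the new columns with zeros. -/
def extendCols {ρ ι : Type*} (S : Set ι) (G : Matrix ρ ↥S F) : Matrix ρ ι F :=
  Matrix.of fun r => Function.extend (Subtype.val) (G r) (fun _ => 0)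

/-- Zero-pad a matrix with `l` rows to one with `L` rows. -/
def padMat {ι : Type*} (L : ℕ) {l : ℕ} (G : Matrix (Fin l) ι F) : Matrix (Fin L) ι F :=
  Matrix.of fun r j => if h : (r : ℕ) < l then G ⟨(r : ℕ), h⟩ j else 0

section

lemma extend_subtype_val_apply_of_notMem {α β : Type*} {P : Set α} (f : P → β) (g : α → β)
    {j : α} (hj : j ∉ P) : Function.extend Subtype.val f g j = g j :=
  Function.extend_apply' f g j fun ⟨a, ha⟩ => hj (ha ▸ a.2)

variable {R ι ρ : Type*} [CommSemiring R] [Fintype ι] {P : Set ι}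

lemma extend_zero_dotProduct (u : P → R) (x : ι → R) :
    Function.extend Subtype.val u 0 ⬝ᵥ x = u ⬝ᵥ (x ∘ Subtype.val) :=
  Finset.sum_congr_set P _ _
    (fun j hj => by simp [Subtype.val_injective.extend_apply u 0 ⟨j, hj⟩])
    (fun j hj => by simp [extend_subtype_val_apply_of_notMem u 0 hj])

lemma mulVec_extend_zero (G : Matrix ρ ι R) (x : P → R) :
    G *ᵥ Function.extend Subtype.val x 0 = G.submatrix id Subtype.val *ᵥ x := by
  funext r
  rw [mulVec, dotProduct_comm, extend_zero_dotProduct, dotProduct_comm]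
  rfl

end

section

variable {F : Type*} [Field F] {ι ρ : Type*} {S : Set ι}

lemma extendCols_apply_coe (G : Matrix ρ S F) (r : ρ) (j : S) :
    extendCols F S G r j = G r j := by
  simp [extendCols]

lemma extendCols_apply_of_notMem (G : Matrix ρ S F) (r : ρ) {j : ι} (hj : j ∉ S) :
    extendCols F S G r j = 0 :=
  extend_subtype_val_apply_of_notMem (G r) (fun _ => 0) hj

lemma extendCols_submatrix (G : Matrix ρ S F) :
    (extendCols F S G).submatrix id Subtype.val = G := by
  ext r j
  exact extendCols_apply_coe G r j

lemma extendCols_mulVec [Fintype ι] (G : Matrix ρ S F) (x : ι → F) :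
    extendCols F S G *ᵥ x = G *ᵥ (x ∘ Subtype.val) :=
  funext fun r => extend_zero_dotProduct (G r) x

end

section

variable {F : Type*} [Field F] {ι κ ρ ρ' : Type*}

lemma rowSpace_le_iff (G : Matrix ρ ι F) (V : Submodule F (ι → F)) :
    rowSpace F G ≤ V ↔ ∀ r, G r ∈ V := by
  rw [rowSpace, Submodule.span_le, Set.range_subset_iff]
  rfl

lemma rowSpace_submatrix_rows_le (G : Matrix ρ ι F) (f : ρ' → ρ) :
    rowSpace F (G.submatrix f id) ≤ rowSpace F G :=
  Submodule.span_mono (Set.range_comp_subset_range f _)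

lemma rowSpace_submatrix_cols (G : Matrix ρ ι F) (g : κ → ι) :
    rowSpace F (G.submatrix id g) = (rowSpace F G).map (LinearMap.funLeft F F g) := by
  rw [rowSpace, rowSpace, Submodule.map_span, ← Set.range_comp]
  rfl

lemma rowSpace_fromRows (G : Matrix ρ ι F) (H : Matrix ρ' ι F) :
    rowSpace F (fromRows G H) = rowSpace F G ⊔ rowSpace F H := by
  rw [rowSpace, rowSpace, rowSpace, ← Submodule.span_union, ← Set.Sum.elim_range]
  rfl

lemma rowSpace_le_ker_funLeft {T : Set ι} {G : Matrix ρ ι F} (h : ∀ r, ∀ j ∈ T, G r j = 0) :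
    rowSpace F G ≤ LinearMap.ker (LinearMap.funLeft F F ((↑) : T → ι)) :=
  (rowSpace_le_iff G _).2 fun r => funext fun j => h r j j.2

lemma map_funLeft_rowSpace_eq_bot {T : Set ι} {G : Matrix ρ ι F}
    (h : ∀ r, ∀ j ∈ T, G r j = 0) :
    (rowSpace F G).map (LinearMap.funLeft F F ((↑) : T → ι)) = ⊥ :=
  LinearMap.le_ker_iff_map.1 (rowSpace_le_ker_funLeft h)

lemma weaklySecure_iff (G : Matrix ρ ι F) (A : Set ι) :
    WeaklySecure F G A ↔
      ∀ i ∉ A, ∀ w ∈ rowSpace F G, ∃ j ∉ A, w j ≠ (Pi.single i 1 : ι → F) j := by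
  constructor
  · intro hG i hi w hw
    by_contra! hagree
    refine hG i hi (w - Pi.single i 1) (fun j hj => ?_) (by simpa using hw)
    by_contra hjA
    exact hj (sub_eq_zero.2 (hagree j hjA))
  · intro hG i hi u hu hmem
    obtain ⟨j, hjA, hj⟩ := hG i hi _ hmem
    have hu0 : u j = 0 := by_contra fun h => hjA (hu j h)
    exact hj (by simp [hu0])

lemma WeaklySecure.mono {G : Matrix ρ ι F} {G' : Matrix ρ' ι F} {A : Set ι}
    (hG : WeaklySecure F G A) (hle : rowSpace F G' ≤ rowSpace F G) : WeaklySecure F G' A :=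
  fun i hi u hu hmem => hG i hi u hu (hle hmem)

end

section

variable {F : Type*} [Field F] {ι ρ ρ' : Type*}

lemma exists_ne_single_of_map_funLeft_le {P A : Set ι} {G : Matrix ρ ι F}
    {G₀ : Matrix ρ' P F} (hG₀ : WeaklySecure F G₀ (Subtype.val ⁻¹' A))
    (hle : (rowSpace F G).map (LinearMap.funLeft F F ((↑) : P → ι)) ≤ rowSpace F G₀)
    {i : ι} (hiP : i ∈ P) (hiA : i ∉ A) {w : ι → F} (hw : w ∈ rowSpace F G) :
    ∃ j ∉ A, w j ≠ (Pi.single i 1 : ι → F) j := by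
  obtain ⟨j, hjA, hj⟩ := (weaklySecure_iff G₀ _).1 hG₀ ⟨i, hiP⟩ hiA _ (hle ⟨w, hw, rfl⟩)
  exact ⟨j, hjA, by simpa [Pi.single_apply, Subtype.ext_iff] using hj⟩

lemma WeaklySecure.submatrix_subtype {G : Matrix ρ ι F} {A P Q : Set ι} {S : Set ρ}
    (hG : WeaklySecure F G A) (hPQ : Disjoint P Q) (hcov : ∀ j ∉ A, j ∈ P ∨ j ∈ Q)
    (hS : ∀ r ∈ S, ∀ j ∈ Q, G r j = 0) :
    WeaklySecure F (G.submatrix ((↑) : S → ρ) ((↑) : P → ι)) (Subtype.val ⁻¹' A) := by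
  rw [weaklySecure_iff]
  intro i hiA v hv
  rw [show G.submatrix ((↑) : S → ρ) ((↑) : P → ι) = (G.submatrix (↑) id).submatrix id (↑)
    from rfl, rowSpace_submatrix_cols] at hv
  obtain ⟨w, hw, rfl⟩ := hv
  have hwQ : ∀ j ∈ Q, w j = 0 := fun j hj =>
    congrFun (rowSpace_le_ker_funLeft (G := G.submatrix ((↑) : S → ρ) id)
      (fun r j hj => hS r r.2 j hj) hw) ⟨j, hj⟩
  obtain ⟨j, hjA, hj⟩ :=
    (weaklySecure_iff G A).1 hG i hiA w (rowSpace_submatrix_rows_le G _ hw)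
  rcases hcov j hjA with hjP | hjQ
  · exact ⟨⟨j, hjP⟩, hjA, by simpa [Pi.single_apply, Subtype.ext_iff] using hj⟩
  · have hji : j ≠ i := fun h => hPQ.notMem_of_mem_left i.2 (h ▸ hjQ)
    simp [hwQ j hjQ, hji] at hj

lemma TwoSenderForm.submatrix_rows {P1 P2 : Set ι} {G : Matrix ρ ι F}
    (hG : TwoSenderForm F P1 P2 G) (f : ρ' → ρ) : TwoSenderForm F P1 P2 (G.submatrix f id) :=
  let ⟨S, hS, hSc⟩ := hG
  ⟨f ⁻¹' S, fun r hr => hS (f r) hr, fun r hr => hSc (f r) hr⟩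

variable [Fintype ι] {K : ι → Set ι}

lemma validCode_iff (G : Matrix ρ ι F) :
    ValidCode F K G ↔ ∀ i x, G *ᵥ x = 0 → (∀ j ∈ K i, x j = 0) → x i = 0 := by
  constructor
  · intro hG i x hx hK
    obtain ⟨D, hD⟩ := hG i
    calc x i = D (G *ᵥ x) (fun j => x j) := (hD x).symm
      _ = D (G *ᵥ 0) (fun j => (0 : ι → F) j) := by
        rw [hx, mulVec_zero]
        exact congrArg _ (funext fun j => hK j j.2)
      _ = 0 := hD 0
  · intro hG i
    -- decode with any message consistent with the codeword and the side information
    refine ⟨fun c z => if h : ∃ y, G *ᵥ y = c ∧ ∀ j : K i, y j = z j then h.choose i else 0,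
      fun x => ?_⟩
    have hx : ∃ y, G *ᵥ y = G *ᵥ x ∧ ∀ j : K i, y j = x j := ⟨x, rfl, fun _ => rfl⟩
    obtain ⟨hy, hyK⟩ := hx.choose_spec
    have hdiff := hG i (hx.choose - x) (by rw [mulVec_sub, hy, sub_self])
      (fun j hj => sub_eq_zero.2 (hyK ⟨j, hj⟩))
    dsimp only
    rw [dif_pos hx]
    exact sub_eq_zero.1 hdiff

lemma ValidCode.submatrix_of_surjective {G : Matrix ρ ι F} (hG : ValidCode F K G)
    {f : ρ' → ρ} (hf : f.Surjective) : ValidCode F K (G.submatrix f id) := by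
  rw [validCode_iff] at hG ⊢
  refine fun i x hx => hG i x (funext fun r => ?_)
  obtain ⟨s, rfl⟩ := hf r
  exact congrFun hx s

lemma ValidCode.submatrix_subtype {G : Matrix ρ ι F} {P : Set ι} {S : Set ρ}
    (hG : ValidCode F K G) (hS : ∀ r ∉ S, ∀ j ∈ P, G r j = 0) :
    ValidCode F (subK K P) (G.submatrix ((↑) : S → ρ) ((↑) : P → ι)) := by
  rw [validCode_iff] at hG ⊢
  intro i x hx hK
  have hX : G *ᵥ Function.extend Subtype.val x 0 = 0 := by
    rw [mulVec_extend_zero]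
    funext r
    by_cases hr : r ∈ S
    · exact congrFun hx ⟨r, hr⟩
    · exact Finset.sum_eq_zero fun j _ => by simp [hS r hr j j.2]
  have hXK : ∀ j ∈ K i, Function.extend Subtype.val x 0 j = 0 := fun j hj => by
    by_cases hjP : j ∈ P
    · rw [Subtype.val_injective.extend_apply x 0 ⟨j, hjP⟩]
      exact hK ⟨j, hjP⟩ hj
    · exact extend_subtype_val_apply_of_notMem x 0 hjP
  simpa [Subtype.val_injective.extend_apply] using hG i _ hX hXK

end

section

variable {F : Type*} [Field F] {ι ρ ρ' : Type*} [Fintype ι] {K : ι → Set ι} {A : Set ι}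

lemma card_mem_oneLens [Fintype ρ] {G : Matrix ρ ι F} (hv : ValidCode F K G)
    (hs : WeaklySecure F G A) : Fintype.card ρ ∈ oneLens F K A :=
  ⟨G.submatrix (Fintype.equivFin ρ).symm id,
    hv.submatrix_of_surjective (Fintype.equivFin ρ).symm.surjective,
    hs.mono (rowSpace_submatrix_rows_le G _)⟩

lemma card_mem_twoLens [Fintype ρ] {P1 P2 : Set ι} {G : Matrix ρ ι F}
    (ht : TwoSenderForm F P1 P2 G) (hv : ValidCode F K G) (hs : WeaklySecure F G A) :
    Fintype.card ρ ∈ twoLens F P1 P2 K A :=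
  ⟨G.submatrix (Fintype.equivFin ρ).symm id, ht.submatrix_rows _,
    hv.submatrix_of_surjective (Fintype.equivFin ρ).symm.surjective,
    hs.mono (rowSpace_submatrix_rows_le G _)⟩

lemma sInf_oneLens_add_sInf_oneLens_le {P1 P2 : Set ι} (hP : Disjoint P1 P2)
    (hcov : ∀ j ∉ A, j ∈ P1 ∨ j ∈ P2) {l : ℕ} (hl : l ∈ twoLens F P1 P2 K A) :
    sInf (oneLens F (subK K P1) (Subtype.val ⁻¹' A)) +
      sInf (oneLens F (subK K P2) (Subtype.val ⁻¹' A)) ≤ l := by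
  obtain ⟨G, ⟨S, hS, hSc⟩, hv, hs⟩ := hl
  have h1 : Fintype.card S ∈ oneLens F (subK K P1) (Subtype.val ⁻¹' A) :=
    card_mem_oneLens (hv.submatrix_subtype hSc) (hs.submatrix_subtype hP hcov hS)
  have h2 : Fintype.card ↥Sᶜ ∈ oneLens F (subK K P2) (Subtype.val ⁻¹' A) :=
    card_mem_oneLens (hv.submatrix_subtype fun r hr => hS r (not_not.1 hr))
      (hs.submatrix_subtype hP.symm (fun j hj => (hcov j hj).symm) hSc)
  calc _ ≤ Fintype.card S + Fintype.card ↥Sᶜ := add_le_add (Nat.sInf_le h1) (Nat.sInf_le h2)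
    _ = l := by
      rw [Fintype.card_compl_set, Fintype.card_fin]
      have := Fintype.card_fin l ▸ set_fintype_card_le_univ S
      omega

end

section

variable {F : Type*} [Field F] {ι ρ₁ ρ₂ : Type*} {P1 P2 : Set ι} (P12 : Set ι)
  (G1 : Matrix ρ₁ P1 F) (G2 : Matrix ρ₂ P2 F)

def stackedCode : Matrix ((ρ₁ ⊕ P12) ⊕ ρ₂) ι F :=
  fromRows (fromRows (extendCols F P1 G1) ((1 : Matrix ι ι F).submatrix (↑) id))
    (extendCols F P2 G2)

variable {P12 G1 G2}

lemma one_submatrix_apply_of_disjoint {T : Set ι} (h : Disjoint T P12) (k : P12) {j : ι}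
    (hj : j ∈ T) : (1 : Matrix ι ι F).submatrix ((↑) : P12 → ι) id k j = 0 :=
  one_apply_ne' fun (hjk : j = k) => h.notMem_of_mem_left hj (hjk ▸ k.2)

lemma twoSenderForm_stackedCode (h12 : Disjoint P1 P2) (h212 : Disjoint P2 P12) :
    TwoSenderForm F P1 P2 (stackedCode P12 G1 G2) := by
  refine ⟨Set.range Sum.inl, ?_, ?_⟩
  · rintro _ ⟨r | k, rfl⟩ j hj
    · exact extendCols_apply_of_notMem G1 r (h12.notMem_of_mem_right hj)
    · exact one_submatrix_apply_of_disjoint h212 k hj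
  · rintro (r | r) hr j hj
    · exact absurd ⟨r, rfl⟩ hr
    · exact extendCols_apply_of_notMem G2 r (h12.notMem_of_mem_left hj)

lemma validCode_stackedCode [Fintype ι] {K : ι → Set ι}
    (hcov : ∀ i, i ∈ P1 ∨ i ∈ P2 ∨ i ∈ P12)
    (hv1 : ValidCode F (subK K P1) G1) (hv2 : ValidCode F (subK K P2) G2) :
    ValidCode F K (stackedCode P12 G1 G2) := by
  rw [validCode_iff] at hv1 hv2 ⊢
  intro i x hx hK
  have hx1 : G1 *ᵥ (x ∘ (↑)) = 0 := by
    rw [← extendCols_mulVec]; exact funext fun r => congrFun hx (.inl (.inl r))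
  have hx2 : G2 *ᵥ (x ∘ (↑)) = 0 := by
    rw [← extendCols_mulVec]; exact funext fun r => congrFun hx (.inr r)
  rcases hcov i with hi | hi | hi
  · exact hv1 ⟨i, hi⟩ _ hx1 fun j hj => hK j hj
  · exact hv2 ⟨i, hi⟩ _ hx2 fun j hj => hK j hj
  · simpa [stackedCode, mulVec, dotProduct, one_apply] using congrFun hx (.inl (.inr ⟨i, hi⟩))

lemma map_funLeft_rowSpace_extendCols {S : Set ι} {ρ : Type*} (G : Matrix ρ S F) :
    (rowSpace F (extendCols F S G)).map (LinearMap.funLeft F F (↑)) = rowSpace F G := by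
  rw [← rowSpace_submatrix_cols, extendCols_submatrix]

lemma map_funLeft_rowSpace_stackedCode_left (h12 : Disjoint P1 P2) (h112 : Disjoint P1 P12) :
    (rowSpace F (stackedCode P12 G1 G2)).map (LinearMap.funLeft F F ((↑) : P1 → ι)) =
      rowSpace F G1 := by
  have hI := map_funLeft_rowSpace_eq_bot (G := (1 : Matrix ι ι F).submatrix ((↑) : P12 → ι) id)
    fun k _ hj => one_submatrix_apply_of_disjoint h112 k hj
  have h2 := map_funLeft_rowSpace_eq_bot
    fun r _ hj => extendCols_apply_of_notMem G2 r (h12.notMem_of_mem_left hj)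
  rw [stackedCode, rowSpace_fromRows, rowSpace_fromRows, Submodule.map_sup, Submodule.map_sup,
    map_funLeft_rowSpace_extendCols, hI, h2, sup_bot_eq, sup_bot_eq]

lemma map_funLeft_rowSpace_stackedCode_right (h12 : Disjoint P1 P2) (h212 : Disjoint P2 P12) :
    (rowSpace F (stackedCode P12 G1 G2)).map (LinearMap.funLeft F F ((↑) : P2 → ι)) =
      rowSpace F G2 := by
  have hI := map_funLeft_rowSpace_eq_bot (G := (1 : Matrix ι ι F).submatrix ((↑) : P12 → ι) id)
    fun k _ hj => one_submatrix_apply_of_disjoint h212 k hj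
  have h1 := map_funLeft_rowSpace_eq_bot
    fun r _ hj => extendCols_apply_of_notMem G1 r (h12.notMem_of_mem_right hj)
  rw [stackedCode, rowSpace_fromRows, rowSpace_fromRows, Submodule.map_sup, Submodule.map_sup,
    map_funLeft_rowSpace_extendCols, hI, h1, bot_sup_eq, bot_sup_eq]

lemma weaklySecure_stackedCode {A : Set ι} (h12 : Disjoint P1 P2) (h112 : Disjoint P1 P12)
    (h212 : Disjoint P2 P12) (hcov : ∀ j ∉ A, j ∈ P1 ∨ j ∈ P2)
    (hs1 : WeaklySecure F G1 (Subtype.val ⁻¹' A)) (hs2 : WeaklySecure F G2 (Subtype.val ⁻¹' A)) :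
    WeaklySecure F (stackedCode P12 G1 G2) A := by
  rw [weaklySecure_iff]
  intro i hiA w hw
  rcases hcov i hiA with hi | hi
  · exact exists_ne_single_of_map_funLeft_le hs1
      (map_funLeft_rowSpace_stackedCode_left h12 h112).le hi hiA hw
  · exact exists_ne_single_of_map_funLeft_le hs2
      (map_funLeft_rowSpace_stackedCode_right h12 h212).le hi hiA hw

end

theorem opt_twoSender_ge_add_of_eaves_knows_common {m : ℕ}
    (P1 P2 P12 : Set (Fin m))
    (h12 : Disjoint P1 P2) (h112 : Disjoint P1 P12) (h212 : Disjoint P2 P12)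
    (hcov : P1 ∪ P2 ∪ P12 = Set.univ)
    (K : Fin m → Set (Fin m))
    (A : Set (Fin m)) (hA12 : P12 ⊆ A)
    (h1 : (oneLens F (subK K P1) (Subtype.val ⁻¹' A)).Nonempty)
    (h2 : (oneLens F (subK K P2) (Subtype.val ⁻¹' A)).Nonempty) :
    sInf (oneLens F (subK K P1) (Subtype.val ⁻¹' A)) +
        sInf (oneLens F (subK K P2) (Subtype.val ⁻¹' A)) ≤
      sInf (twoLens F P1 P2 K A) ∧
    (sInf (twoLens F P1 P2 K A) ≤
        sInf (oneLens F (subK K P1) (Subtype.val ⁻¹' A)) +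
          sInf (oneLens F (subK K P2) (Subtype.val ⁻¹' A)) →
      sInf (twoLens F P1 P2 K A) =
        sInf (oneLens F (subK K P1) (Subtype.val ⁻¹' A)) +
          sInf (oneLens F (subK K P2) (Subtype.val ⁻¹' A))) := by
  have hcov₃ : ∀ j, j ∈ P1 ∨ j ∈ P2 ∨ j ∈ P12 := fun j => by
    simpa [or_assoc] using hcov.ge (Set.mem_univ j)
  have hcovA : ∀ j ∉ A, j ∈ P1 ∨ j ∈ P2 := fun j hj =>
    (hcov₃ j).imp_right (Or.resolve_right · fun h => hj (hA12 h))
  obtain ⟨_, G1, hv1, hs1⟩ := h1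
  obtain ⟨_, G2, hv2, hs2⟩ := h2
  have hstacked : _ ∈ twoLens F P1 P2 K A :=
    card_mem_twoLens (twoSenderForm_stackedCode h12 h212) (validCode_stackedCode hcov₃ hv1 hv2)
      (weaklySecure_stackedCode h12 h112 h212 hcovA hs1 hs2)
  have hle := sInf_oneLens_add_sInf_oneLens_le h12 hcovA (Nat.sInf_mem ⟨_, hstacked⟩)
  exact ⟨hle, fun hge => le_antisymm hge hle⟩
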